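/- Let n, d be positive integers and ε a real number with 0 < ε ≤ n. There exist a nonnegative integer σ ≤ ⌈n·log₂(e·(2(d+2)/ε)^{d+1}·n^d + e − e/n)⌉ and a σ-bit training/inference pair (ρ, f̂) for datasets in [0,1]^{n×(d+1)} with query domain Q_c such that for every dataset D ∈ [0,1]^{n×(d+1)}, ∫_{Q_c} |f̂(ρ(D))(q) − s_D(q)| dq ≤ ε. -/

import Mathlib

open MeasureTheory

/-- The query domain `Q_c` for `d`-dimensional range queries: a query is a pair `(c, r)`
with `r_j ∈ [0,1]` and `c_j ∈ [−r_j, 1−r_j]` for all `j`. -/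
def Qc (d : ℕ) : Set ((Fin d → ℝ) × (Fin d → ℝ)) :=
  {q | ∀ j, q.2 j ∈ Set.Icc (0 : ℝ) 1 ∧ q.1 j ∈ Set.Icc (-(q.2 j)) (1 - q.2 j)}

/-- The range-sum function of a `(d+1)`-dimensional dataset:
`s_D(q) = Σ_i 1[c_j ≤ D_{i,j} ≤ c_j + r_j for all j ∈ [d]] · D_{i,d+1}`. -/
noncomputable def sumF {n d : ℕ} (D : Fin n → Fin (d + 1) → ℝ)
    (q : (Fin d → ℝ) × (Fin d → ℝ)) : ℝ :=
  ∑ i, if ∀ j : Fin d, q.1 j ≤ D i j.castSucc ∧ D i j.castSucc ≤ q.1 j + q.2 j then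
    D i (Fin.last d) else 0

/-!
Snap every attribute of every row to the centre of one of `m = ⌊2(d+2)n/ε⌋` cells per axis and
store only the resulting multiset of `n` grid points. There are
`multichoose (m^(d+1)) n ≤ (e (m^(d+1) + n - 1) / n)^n` such multisets, which is where the
number of bits comes from.

Moving a point by at most `δ = 1/(2m)` in every coordinate changes its contribution to `s_D(q)`
by at most `δ`, except for the queries one of whose `2d` box faces lies between the old and the
new position. Since `Q_c` is the union over `r ∈ [0,1]^d` of the translated cubes
`[0,1]^d - r`, each of these `2d` slabs meets `Q_c` in measure at most `δ`. Hence the `L¹`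
error is at most `n (2d+1) δ ≤ ε`.
-/

open Set
open scoped ENNReal

lemma Nat.choose_le_exp_mul_div_pow (N k : ℕ) :
    (N.choose k : ℝ) ≤ (Real.exp 1 * N / k) ^ k := by
  rcases k.eq_zero_or_pos with rfl | hk
  · simp
  have hk' : (0 : ℝ) < k := by exact_mod_cast hk
  calc (N.choose k : ℝ) ≤ N ^ k / k.factorial := Nat.choose_le_pow_div k N
    _ = (N / k) ^ k * (k ^ k / k.factorial) := by
        rw [← mul_div_assoc, div_pow, div_mul_cancel₀ _ (pow_ne_zero _ hk'.ne')]
    _ ≤ (N / k) ^ k * Real.exp k := by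
        gcongr
        exact Real.pow_div_factorial_le_exp _ hk'.le _
    _ = (Real.exp 1 * N / k) ^ k := by
        rw [← Real.exp_one_pow, mul_div_assoc, mul_pow, mul_comm]

lemma Sym.card_le_exp_mul_div_pow (α : Type*) [Fintype α] [DecidableEq α] [Nonempty α] (k : ℕ) :
    (Fintype.card (Sym α k) : ℝ) ≤ (Real.exp 1 * (Fintype.card α + k - 1) / k) ^ k := by
  rw [Sym.card_sym_eq_multichoose, Nat.multichoose_eq]
  convert Nat.choose_le_exp_mul_div_pow _ k using 4
  rw [Nat.cast_sub (by linarith [Fintype.card_pos (α := α)]), Nat.cast_add, Nat.cast_one]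

lemma Fintype.exists_leftInverse_bits {α : Type*} [Fintype α] [Nonempty α] {x : ℝ}
    (hx : (Fintype.card α : ℝ) ≤ x) :
    ∃ σ : ℕ, (σ : ℤ) ≤ ⌈Real.logb 2 x⌉ ∧
      ∃ (enc : α → Fin σ → Bool) (dec : (Fin σ → Bool) → α), Function.LeftInverse dec enc := by
  have hcard : (0 : ℝ) < Fintype.card α := by exact_mod_cast Fintype.card_pos
  obtain ⟨enc⟩ : Nonempty (α ↪ (Fin (Nat.clog 2 (Fintype.card α)) → Bool)) :=
    Function.Embedding.nonempty_of_card_le (by simpa using Nat.le_pow_clog one_lt_two _)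
  refine ⟨_, ?_, enc, Function.invFun enc, Function.leftInverse_invFun enc.injective⟩
  rw [← Int.clog_natCast (R := ℝ), ← Real.ceil_logb_natCast hcard.le, Nat.cast_ofNat]
  exact Int.ceil_le_ceil (Real.logb_le_logb_of_le one_lt_two hcard hx)

lemma mem_uIcc_of_mem_Icc_of_notMem {lo hi x y : ℝ} (hx : x ∈ Icc lo hi) (hy : y ∉ Icc lo hi) :
    lo ∈ uIcc x y ∨ hi ∈ uIcc x y := by
  rw [mem_Icc, not_and_or, not_le, not_le] at hy
  rcases hy with hy | hy
  · exact .inl (mem_uIcc.2 (.inr ⟨hy.le, hx.1⟩))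
  · exact .inr (mem_uIcc.2 (.inl ⟨hx.2, hy.le⟩))

lemma volume_unitCube_inter_slab_le {d : ℕ} (j : Fin d) (a b : ℝ) :
    volume (Icc (0 : Fin d → ℝ) 1 ∩ {u | u j ∈ Icc a b}) ≤ ENNReal.ofReal (b - a) := by
  classical
  have hsub : Icc (0 : Fin d → ℝ) 1 ∩ {u | u j ∈ Icc a b} ⊆
      Set.pi univ (Function.update (fun _ => Icc 0 1) j (Icc a b)) := by
    rintro u ⟨hu, huj⟩ k -
    rcases eq_or_ne k j with rfl | hk
    · simpa using huj
    · simpa [hk] using ⟨hu.1 k, hu.2 k⟩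
  calc _ ≤ _ := measure_mono hsub
    _ = ENNReal.ofReal (b - a) := by
      simp [volume_pi_pi, Function.update_apply, apply_ite, Real.volume_Icc]

namespace RangeSum

lemma mem_Qc_iff {d : ℕ} {q : (Fin d → ℝ) × (Fin d → ℝ)} :
    q ∈ Qc d ↔ q.2 ∈ Icc 0 1 ∧ q.1 + q.2 ∈ Icc 0 1 := by
  simp only [Qc, mem_ofPred_eq, mem_Icc, Pi.le_def, Pi.add_apply, Pi.zero_apply, Pi.one_apply,
    ← forall_and]
  refine forall_congr' fun j => ?_
  constructor <;> rintro ⟨⟨h0, h1⟩, h2, h3⟩ <;> refine ⟨⟨?_, ?_⟩, ?_, ?_⟩ <;> linarith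

lemma measurableSet_Qc (d : ℕ) : MeasurableSet (Qc d) := by
  have : Qc d = Prod.snd ⁻¹' Icc 0 1 ∩ (fun q => q.1 + q.2) ⁻¹' Icc 0 1 :=
    Set.ext fun _ => mem_Qc_iff
  rw [this]
  exact (measurable_snd measurableSet_Icc).inter
    ((measurable_fst.add measurable_snd) measurableSet_Icc)

/-- Fubini over the width `r`: the `r`-section of `Qc d` is the unit cube translated by `-r`. -/
lemma volume_inter_Qc_le {d : ℕ} {S : Set ((Fin d → ℝ) × (Fin d → ℝ))} (hS : MeasurableSet S)
    {c : ℝ≥0∞} (h : ∀ r ∈ Icc (0 : Fin d → ℝ) 1, volume {u ∈ Icc 0 1 | (u - r, r) ∈ S} ≤ c) :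
    volume (S ∩ Qc d) ≤ c := by
  rw [Measure.volume_eq_prod, Measure.prod_apply_symm (hS.inter (measurableSet_Qc d))]
  calc ∫⁻ r, volume ((fun c => (c, r)) ⁻¹' (S ∩ Qc d))
      ≤ ∫⁻ r, (Icc (0 : Fin d → ℝ) 1).indicator (fun _ => c) r := lintegral_mono fun r => ?_
    _ = c := by simp [lintegral_indicator_const measurableSet_Icc, Real.volume_Icc_pi]
  by_cases hr : r ∈ Icc (0 : Fin d → ℝ) 1
  · have hsec : (fun c => (c, r)) ⁻¹' (S ∩ Qc d) =
        (fun u => u + r) ⁻¹' {u ∈ Icc 0 1 | (u - r, r) ∈ S} := by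
      ext u
      simp [mem_Qc_iff, hr, and_comm]
    rw [indicator_of_mem hr, hsec, measure_preimage_add_right]
    exact h r hr
  · have hsec : (fun c => (c, r)) ⁻¹' (S ∩ Qc d) = ∅ := by
      ext u
      simp [mem_Qc_iff, hr]
    simp [hsec]

lemma volume_Qc_le_one (d : ℕ) : volume (Qc d) ≤ 1 := by
  simpa using volume_inter_Qc_le MeasurableSet.univ fun r _ =>
    (measure_mono (sep_subset _ _)).trans (by simp [Real.volume_Icc_pi])

/-- For `t = 0` and `t = 1` these are the queries whose box has its lower, resp. upper, face in
direction `j` between `a` and `b`. -/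
def faceSlab {d : ℕ} (j : Fin d) (t a b : ℝ) : Set ((Fin d → ℝ) × (Fin d → ℝ)) :=
  {q | q.1 j + t * q.2 j ∈ uIcc a b}

lemma measurableSet_faceSlab {d : ℕ} (j : Fin d) (t a b : ℝ) : MeasurableSet (faceSlab j t a b) :=
  (by fun_prop : Measurable fun q : (Fin d → ℝ) × (Fin d → ℝ) => q.1 j + t * q.2 j)
    measurableSet_uIcc

lemma volume_faceSlab_inter_Qc_le {d : ℕ} (j : Fin d) (t a b : ℝ) :
    volume (faceSlab j t a b ∩ Qc d) ≤ ENNReal.ofReal |a - b| := by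
  refine volume_inter_Qc_le (measurableSet_faceSlab j t a b) fun r _ => ?_
  have : {u ∈ Icc (0 : Fin d → ℝ) 1 | (u - r, r) ∈ faceSlab j t a b}
      = Icc 0 1 ∩ {u | u j ∈ Icc (min a b + (1 - t) * r j) (max a b + (1 - t) * r j)} := by
    ext u
    simp only [faceSlab, uIcc, mem_ofPred_eq, mem_inter_iff, mem_Icc, Pi.sub_apply]
    constructor <;> rintro ⟨hu, h1, h2⟩ <;> exact ⟨hu, by linarith, by linarith⟩
  rw [this, ← max_sub_min_eq_abs']
  convert volume_unitCube_inter_slab_le j _ _ using 2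
  ring

noncomputable def rangeTerm {d : ℕ} (x : Fin (d + 1) → ℝ) (q : (Fin d → ℝ) × (Fin d → ℝ)) : ℝ :=
  if ∀ j : Fin d, q.1 j ≤ x j.castSucc ∧ x j.castSucc ≤ q.1 j + q.2 j then x (Fin.last d) else 0

lemma sumF_apply {n d : ℕ} (D : Fin n → Fin (d + 1) → ℝ) (q : (Fin d → ℝ) × (Fin d → ℝ)) :
    sumF D q = ∑ i, rangeTerm (D i) q :=
  rfl

/-- The number of faces of the query box that separate `x` from `y`. -/
noncomputable def faceCrossings {d : ℕ} (x y : Fin (d + 1) → ℝ) (q : (Fin d → ℝ) × (Fin d → ℝ)) :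
    ℝ≥0∞ :=
  ∑ j : Fin d, ∑ t ∈ ({0, 1} : Finset ℝ), (faceSlab j t (x j.castSucc) (y j.castSucc)).indicator 1 q

lemma faceCrossings_comm {d : ℕ} (x y : Fin (d + 1) → ℝ) :
    faceCrossings x y = faceCrossings y x := by
  funext q
  unfold faceCrossings faceSlab
  congr! 5
  rw [uIcc_comm]

lemma measurable_faceCrossings {d : ℕ} (x y : Fin (d + 1) → ℝ) : Measurable (faceCrossings x y) :=
  Finset.measurable_sum _ fun _ _ => Finset.measurable_sum _ fun _ _ =>
    measurable_one.indicator (measurableSet_faceSlab _ _ _ _)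

lemma one_le_faceCrossings {d : ℕ} {x y : Fin (d + 1) → ℝ} {q : (Fin d → ℝ) × (Fin d → ℝ)}
    (hx : ∀ j : Fin d, q.1 j ≤ x j.castSucc ∧ x j.castSucc ≤ q.1 j + q.2 j)
    (hy : ¬ ∀ j : Fin d, q.1 j ≤ y j.castSucc ∧ y j.castSucc ≤ q.1 j + q.2 j) :
    1 ≤ faceCrossings x y q := by
  obtain ⟨j, hj⟩ := not_forall.1 hy
  have hface (t : ℝ) (ht : t ∈ ({0, 1} : Finset ℝ))
      (hq : q ∈ faceSlab j t (x j.castSucc) (y j.castSucc)) : 1 ≤ faceCrossings x y q := by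
    refine le_trans ?_ (Finset.single_le_sum (fun _ _ => zero_le) (Finset.mem_univ j))
    refine le_trans ?_ (Finset.single_le_sum (fun _ _ => zero_le) ht)
    simp [indicator_of_mem hq]
  rcases mem_uIcc_of_mem_Icc_of_notMem (hx j) (mt (fun h => ⟨h.1, h.2⟩) hj) with h | h
  · exact hface 0 (by simp) (by simpa [faceSlab] using h)
  · exact hface 1 (by simp) (by simpa [faceSlab] using h)

lemma ofReal_abs_rangeTerm_sub_le {d : ℕ} {δ : ℝ} {x y : Fin (d + 1) → ℝ}
    (hx : |x (Fin.last d)| ≤ 1) (hy : |y (Fin.last d)| ≤ 1)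
    (hxy : |y (Fin.last d) - x (Fin.last d)| ≤ δ) (q : (Fin d → ℝ) × (Fin d → ℝ)) :
    ENNReal.ofReal |rangeTerm y q - rangeTerm x q| ≤ ENNReal.ofReal δ + faceCrossings x y q := by
  unfold rangeTerm
  split_ifs with hqy hqx hqx
  · exact le_add_right (ENNReal.ofReal_le_ofReal hxy)
  · rw [sub_zero, faceCrossings_comm]
    exact le_add_left ((ENNReal.ofReal_le_one.2 hy).trans (one_le_faceCrossings hqy hqx))
  · rw [zero_sub, abs_neg]
    exact le_add_left ((ENNReal.ofReal_le_one.2 hx).trans (one_le_faceCrossings hqx hqy))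
  · simp

lemma setLIntegral_Qc_faceCrossings_le {d : ℕ} {δ : ℝ} {x y : Fin (d + 1) → ℝ}
    (hxy : ∀ j : Fin d, |x j.castSucc - y j.castSucc| ≤ δ) :
    ∫⁻ q in Qc d, faceCrossings x y q ≤ 2 * d * ENNReal.ofReal δ := by
  have hslab (j : Fin d) (t : ℝ) :
      ∫⁻ q in Qc d, (faceSlab j t (x j.castSucc) (y j.castSucc)).indicator 1 q
        ≤ ENNReal.ofReal δ := by
    rw [lintegral_indicator_one (measurableSet_faceSlab _ _ _ _),
      Measure.restrict_apply (measurableSet_faceSlab _ _ _ _)]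
    exact (volume_faceSlab_inter_Qc_le j t _ _).trans (ENNReal.ofReal_le_ofReal (hxy j))
  unfold faceCrossings
  rw [lintegral_finsetSum _ fun _ _ => Finset.measurable_sum _ fun _ _ =>
    measurable_one.indicator (measurableSet_faceSlab _ _ _ _)]
  calc _ ≤ ∑ _j : Fin d, ∑ _t ∈ ({0, 1} : Finset ℝ), ENNReal.ofReal δ := by
        refine Finset.sum_le_sum fun j _ => ?_
        rw [lintegral_finsetSum _ fun _ _ =>
          measurable_one.indicator (measurableSet_faceSlab _ _ _ _)]
        exact Finset.sum_le_sum fun t _ => hslab j t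
    _ = 2 * d * ENNReal.ofReal δ := by
        simp [Finset.card_pair zero_ne_one]
        ring

lemma setLIntegral_Qc_abs_sumF_sub_le {n d : ℕ} {δ : ℝ} {D E : Fin n → Fin (d + 1) → ℝ}
    (hD : ∀ i, |D i (Fin.last d)| ≤ 1) (hE : ∀ i, |E i (Fin.last d)| ≤ 1)
    (hDE : ∀ i k, |D i k - E i k| ≤ δ) :
    ∫⁻ q in Qc d, ENNReal.ofReal |sumF E q - sumF D q|
      ≤ n * ((2 * d + 1) * ENNReal.ofReal δ) := by
  have hpt (q : (Fin d → ℝ) × (Fin d → ℝ)) : ENNReal.ofReal |sumF E q - sumF D q|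
      ≤ ∑ i, (ENNReal.ofReal δ + faceCrossings (D i) (E i) q) :=
    calc _ ≤ ENNReal.ofReal (∑ i, |rangeTerm (E i) q - rangeTerm (D i) q|) := by
          rw [sumF_apply, sumF_apply, ← Finset.sum_sub_distrib]
          exact ENNReal.ofReal_le_ofReal (Finset.abs_sum_le_sum_abs _ _)
      _ = ∑ i, ENNReal.ofReal |rangeTerm (E i) q - rangeTerm (D i) q| :=
          ENNReal.ofReal_sum_of_nonneg fun _ _ => abs_nonneg _
      _ ≤ _ := Finset.sum_le_sum fun i _ => ofReal_abs_rangeTerm_sub_le (hD i) (hE i)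
          (by rw [abs_sub_comm]; exact hDE i _) q
  calc _ ≤ ∫⁻ q in Qc d, ∑ i, (ENNReal.ofReal δ + faceCrossings (D i) (E i) q) :=
        lintegral_mono hpt
    _ = ∑ i, (ENNReal.ofReal δ * volume (Qc d) + ∫⁻ q in Qc d, faceCrossings (D i) (E i) q) := by
        rw [lintegral_finsetSum (f := fun i q => ENNReal.ofReal δ + faceCrossings (D i) (E i) q) _
          fun i _ => measurable_const.add (measurable_faceCrossings _ _)]
        simp only [lintegral_add_left measurable_const, setLIntegral_const]
    _ ≤ ∑ _i : Fin n, (ENNReal.ofReal δ + 2 * d * ENNReal.ofReal δ) :=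
        Finset.sum_le_sum fun i _ => add_le_add (mul_le_of_le_one_right' (volume_Qc_le_one d))
          (setLIntegral_Qc_faceCrossings_le fun _ => hDE i _)
    _ = n * ((2 * d + 1) * ENNReal.ofReal δ) := by
        simp only [Finset.sum_const, Finset.card_univ, Fintype.card_fin, nsmul_eq_mul]
        ring

noncomputable def gridIndex (m : ℕ) [NeZero m] (x : ℝ) : Fin m :=
  ⟨min ⌊x * m⌋₊ (m - 1), by have := NeZero.pos m; omega⟩

noncomputable def gridCenter (m : ℕ) (k : Fin m) : ℝ := (k + 1 / 2) / m

lemma abs_gridCenter_le_one {m : ℕ} (k : Fin m) : |gridCenter m k| ≤ 1 := by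
  have hk : (k : ℝ) + 1 ≤ m := by exact_mod_cast k.isLt
  rw [gridCenter, abs_of_nonneg (by positivity)]
  exact div_le_one_of_le₀ (by linarith) (by linarith)

lemma abs_sub_gridCenter_gridIndex_le {m : ℕ} [NeZero m] {x : ℝ} (hx : x ∈ Icc 0 1) :
    |x - gridCenter m (gridIndex m x)| ≤ 1 / (2 * m) := by
  have hm : (0 : ℝ) < m := by exact_mod_cast NeZero.pos m
  set k := min ⌊x * m⌋₊ (m - 1)
  have hk_le : (k : ℝ) ≤ x * m :=
    (Nat.cast_le.2 (min_le_left _ _)).trans (Nat.floor_le (by nlinarith [hx.1]))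
  have hle_k : x * m ≤ k + 1 := by
    rcases le_total ⌊x * m⌋₊ (m - 1) with h | h
    · rw [show k = ⌊x * m⌋₊ from min_eq_left h]
      exact (Nat.lt_floor_add_one _).le
    · rw [show k = m - 1 from min_eq_right h, Nat.cast_sub NeZero.one_le, Nat.cast_one]
      nlinarith [hx.2]
  calc |x - gridCenter m (gridIndex m x)| = |x * m - (k + 1 / 2)| / m := by
        rw [← abs_of_pos hm, ← abs_div, abs_of_pos hm, sub_div, mul_div_cancel_right₀ _ hm.ne']
        rfl
    _ ≤ 1 / 2 / m := by
        gcongr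
        exact abs_le.2 ⟨by linarith, by linarith⟩
    _ = 1 / (2 * m) := div_div _ _ _

noncomputable def multisetRangeSum {d : ℕ} (s : Multiset (Fin (d + 1) → ℝ))
    (q : (Fin d → ℝ) × (Fin d → ℝ)) : ℝ :=
  (s.map (rangeTerm · q)).sum

lemma sumF_eq_multisetRangeSum {n d : ℕ} (D : Fin n → Fin (d + 1) → ℝ) :
    sumF D = multisetRangeSum (Finset.univ.val.map D) := by
  funext q
  rw [multisetRangeSum, Multiset.map_map, Finset.sum_map_val]
  rfl

/-- Forgetting the row order is what brings the count down to `multichoose (m ^ (d + 1)) n`. -/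
noncomputable def quantize {n d : ℕ} (m : ℕ) [NeZero m] (D : Fin n → Fin (d + 1) → ℝ) :
    Sym (Fin (d + 1) → Fin m) n :=
  ⟨Finset.univ.val.map fun i k => gridIndex m (D i k), by simp⟩

noncomputable def gridRangeSum {n d m : ℕ} (s : Sym (Fin (d + 1) → Fin m) n) :
    (Fin d → ℝ) × (Fin d → ℝ) → ℝ :=
  multisetRangeSum ((s : Multiset (Fin (d + 1) → Fin m)).map fun g k => gridCenter m (g k))

lemma gridRangeSum_quantize {n d m : ℕ} [NeZero m] (D : Fin n → Fin (d + 1) → ℝ) :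
    gridRangeSum (quantize m D) = sumF fun i k => gridCenter m (gridIndex m (D i k)) := by
  rw [sumF_eq_multisetRangeSum, gridRangeSum, quantize, Sym.coe_mk, Multiset.map_map]
  rfl

lemma setLIntegral_Qc_abs_gridRangeSum_quantize_sub_le {n d m : ℕ} [NeZero m]
    {D : Fin n → Fin (d + 1) → ℝ} (hD : ∀ i k, D i k ∈ Icc 0 1) :
    ∫⁻ q in Qc d, ENNReal.ofReal |gridRangeSum (quantize m D) q - sumF D q|
      ≤ n * ((2 * d + 1) * ENNReal.ofReal (1 / (2 * m))) := by
  rw [gridRangeSum_quantize]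
  have habs (i : Fin n) : |D i (Fin.last d)| ≤ 1 :=
    abs_le.2 ⟨by linarith [(hD i (Fin.last d)).1], (hD i _).2⟩
  exact setLIntegral_Qc_abs_sumF_sub_le habs (fun _ => abs_gridCenter_le_one _)
    fun i k => abs_sub_gridCenter_gridIndex_le (hD i k)

lemma card_sym_grid_le {n d m : ℕ} [NeZero m] (hn : 0 < n) {C : ℝ} (hm : (m : ℝ) ≤ C * n) :
    (Fintype.card (Sym (Fin (d + 1) → Fin m) n) : ℝ)
      ≤ (Real.exp 1 * C ^ (d + 1) * n ^ d + Real.exp 1 - Real.exp 1 / n) ^ n := by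
  have hn' : (0 : ℝ) < n := by exact_mod_cast hn
  refine (Sym.card_le_exp_mul_div_pow _ n).trans (pow_le_pow_left₀ ?_ ?_ n)
  · have : (1 : ℝ) ≤ Fintype.card (Fin (d + 1) → Fin m) := by
      exact_mod_cast Fintype.card_pos
    exact div_nonneg (mul_nonneg (Real.exp_pos 1).le (by linarith)) hn'.le
  · have hM : (Fintype.card (Fin (d + 1) → Fin m) : ℝ) ≤ (C * n) ^ (d + 1) := by
      simpa using pow_le_pow_left₀ m.cast_nonneg hm (d + 1)
    have hrhs : (Real.exp 1 * C ^ (d + 1) * n ^ d + Real.exp 1 - Real.exp 1 / n) * n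
        = Real.exp 1 * ((C * n) ^ (d + 1) + n - 1) := by
      field_simp
      ring
    rw [div_le_iff₀ hn', hrhs]
    gcongr

noncomputable def gridResolution (d n : ℕ) (ε : ℝ) : ℕ := ⌊2 * ((d : ℝ) + 2) / ε * n⌋₊

lemma gridResolution_pos {n d : ℕ} {ε : ℝ} (hε : 0 < ε) (hεn : ε ≤ n) :
    0 < gridResolution d n ε := by
  refine (Nat.one_le_floor_iff _).2 ?_
  rw [div_mul_eq_mul_div, one_le_div hε]
  nlinarith [d.cast_nonneg (α := ℝ)]

lemma quantization_error_le {n d : ℕ} {ε : ℝ} (hε : 0 < ε) (hεn : ε ≤ n) :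
    (n : ℝ≥0∞) * ((2 * d + 1) * ENNReal.ofReal (1 / (2 * gridResolution d n ε)))
      ≤ ENNReal.ofReal ε := by
  set m := gridResolution d n ε
  have hm : (1 : ℝ) ≤ m := Nat.one_le_cast.2 (gridResolution_pos hε hεn)
  have hlt : (2 * ((d : ℝ) + 2) / ε * n) * ε < (m + 1) * ε :=
    mul_lt_mul_of_pos_right (Nat.lt_floor_add_one _) hε
  rw [div_mul_eq_mul_div, div_mul_cancel₀ _ hε.ne'] at hlt
  have hreal : (n : ℝ) * ((2 * d + 1) * (1 / (2 * m))) ≤ ε := by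
    rw [mul_one_div, mul_div_assoc', div_le_iff₀ (by positivity)]
    nlinarith
  calc _ = ENNReal.ofReal ((n : ℝ) * ((2 * d + 1) * (1 / (2 * m)))) := by
        rw [ENNReal.ofReal_mul (by positivity), ENNReal.ofReal_mul (by positivity)]
        norm_cast
    _ ≤ ENNReal.ofReal ε := ENNReal.ofReal_le_ofReal hreal

end RangeSum

open RangeSum

theorem stmt_9_general (n d : ℕ) (hn : 0 < n)
    (ε : ℝ) (hε1 : 0 < ε) (hε2 : ε ≤ (n : ℝ)) :
    ∃ σ : ℕ, (σ : ℤ) ≤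
      ⌈(n : ℝ) * Real.logb 2 (Real.exp 1 * (2 * ((d : ℝ) + 2) / ε) ^ (d + 1) * (n : ℝ) ^ d
        + Real.exp 1 - Real.exp 1 / (n : ℝ))⌉ ∧
    ∃ (ρ : (Fin n → Fin (d + 1) → ℝ) → (Fin σ → Bool))
      (fhat : (Fin σ → Bool) → (((Fin d → ℝ) × (Fin d → ℝ)) → ℝ)),
      ∀ D : Fin n → Fin (d + 1) → ℝ, (∀ i j, D i j ∈ Set.Icc (0 : ℝ) 1) →
        ∫⁻ q in Qc d, ENNReal.ofReal |fhat (ρ D) q - sumF D q| ≤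
          ENNReal.ofReal ε := by
  set m := gridResolution d n ε
  have : NeZero m := ⟨(gridResolution_pos hε1 hε2).ne'⟩
  have hm : (m : ℝ) ≤ 2 * ((d : ℝ) + 2) / ε * n := Nat.floor_le (by positivity)
  obtain ⟨σ, hσ, enc, dec, hdec⟩ :=
    Fintype.exists_leftInverse_bits (card_sym_grid_le (d := d) hn hm)
  rw [Real.logb_pow] at hσ
  refine ⟨σ, hσ, fun D => enc (quantize m D), fun b => gridRangeSum (dec b), fun D hD => ?_⟩
  dsimp only
  rw [hdec]
  exact (setLIntegral_Qc_abs_gridRangeSum_quantize_sub_le hD).trans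
    (quantization_error_le hε1 hε2)

/-- upper bound on the required model size for average-case (1-norm)
error in learned range-sum estimation. -/
theorem stmt_9 (n d : ℕ) (hn : 0 < n) (hd : 0 < d)
    (ε : ℝ) (hε1 : 0 < ε) (hε2 : ε ≤ (n : ℝ)) :
    ∃ σ : ℕ, (σ : ℤ) ≤
      ⌈(n : ℝ) * Real.logb 2 (Real.exp 1 * (2 * ((d : ℝ) + 2) / ε) ^ (d + 1) * (n : ℝ) ^ d
        + Real.exp 1 - Real.exp 1 / (n : ℝ))⌉ ∧
    ∃ (ρ : (Fin n → Fin (d + 1) → ℝ) → (Fin σ → Bool))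
      (fhat : (Fin σ → Bool) → (((Fin d → ℝ) × (Fin d → ℝ)) → ℝ)),
      ∀ D : Fin n → Fin (d + 1) → ℝ, (∀ i j, D i j ∈ Set.Icc (0 : ℝ) 1) →
        ∫⁻ q in Qc d, ENNReal.ofReal |fhat (ρ D) q - sumF D q| ≤
          ENNReal.ofReal ε :=
  stmt_9_general n d hn ε hε1 hε2
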